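/- arXiv:1708.06080 — 2 statements merged into one kernel-verified Lean document; each statement's English description precedes it below -/
import Mathlib

section
/- For every v ∈ (0,1], every N ∈ ℕ₀ and every integer x ≤ N, one has E_x[v^{τ_N^+}; τ_N^+ < τ_{−1}^−] = W_v(x)/W_v(N); in particular the expectation E_0[v^{τ_y^+}; τ_y^+ < τ_{−1}^−] entering the definition of W_v is strictly positive for every y ∈ ℕ₀. -/
open MeasureTheory Set
open scoped ENNReal

noncomputable section

namespace RW

/-- Probability generating function of `p`. -/
def ptilde (p : ℕ → ℝ) (z : ℝ) : ℝ := ∑' k : ℕ, p k * z ^ k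

variable {Ω : Type*} [MeasurableSpace Ω]

/-- The upwards skip-free random walk started at `x` (driven by the claims `C`). -/
def walk (C : ℕ → Ω → ℕ) (x : ℤ) (n : ℕ) (ω : Ω) : ℤ :=
  x + n - ∑ i ∈ Finset.range n, (C i ω : ℤ)

/-- First passage time (weakly) below `b`, `= ⊤` if it never happens. -/
def tauMinus (C : ℕ → Ω → ℕ) (x b : ℤ) (ω : Ω) : ℕ∞ :=
  sInf ((fun n : ℕ => (n : ℕ∞)) '' {n : ℕ | walk C x n ω ≤ b})

/-- First passage time (weakly) above `b`, `= ⊤` if it never happens. -/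
def tauPlus (C : ℕ → Ω → ℕ) (x b : ℤ) (ω : Ω) : ℕ∞ :=
  sInf ((fun n : ℕ => (n : ℕ∞)) '' {n : ℕ | b ≤ walk C x n ω})

/-- `E[f ; A]`, the expectation of `f` on the event `A`. -/
def Eind (P : Measure Ω) (A : Set Ω) (f : Ω → ℝ) : ℝ := ∫ ω, A.indicator f ω ∂P

/-- The first scale function `W_v`. -/
def W (P : Measure Ω) (C : ℕ → Ω → ℕ) (v p0 : ℝ) (y : ℤ) : ℝ :=
  if 0 ≤ y then
    1 / (p0 * Eind P {ω | tauPlus C 0 y ω < tauMinus C 0 (-1) ω}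
          fun ω => v ^ (tauPlus C 0 y ω).toNat)
  else 0

/-- The joint transform of the ruin time and the deficit at ruin. -/
def Psi (P : Measure Ω) (C : ℕ → Ω → ℕ) (v w : ℝ) (x : ℤ) : ℝ :=
  Eind P {ω | tauMinus C x (-1) ω < ⊤}
    fun ω => v ^ (tauMinus C x (-1) ω).toNat *
      w ^ (-(walk C x (tauMinus C x (-1) ω).toNat ω))

/-- The second scale function `Z_v(·, w)` (normalized so that `Z_v(0,w) = 1`). -/
def Z (P : Measure Ω) (C : ℕ → Ω → ℕ) (v w p0 : ℝ) (x : ℤ) : ℝ :=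
  Psi P C v w x + p0 * (1 - Psi P C v w 0) * W P C v p0 x

/-- Cumulative capital injections of the walk reflected at `0`. -/
def Rstar (C : ℕ → Ω → ℕ) (x : ℤ) (n : ℕ) (ω : Ω) : ℤ :=
  max 0 (-(Finset.range (n + 1)).inf' Finset.nonempty_range_add_one fun m => walk C x m ω)

/-- First entrance time of the walk reflected at `0` into `[b, ∞)`. -/
def tauTildePlus (C : ℕ → Ω → ℕ) (x b : ℤ) (ω : Ω) : ℕ∞ :=
  sInf ((fun n : ℕ => (n : ℕ∞)) '' {n : ℕ | b ≤ walk C x n ω + Rstar C x n ω})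

/-- Cumulative dividends under the barrier policy at `b`. -/
def Rdiv (C : ℕ → Ω → ℕ) (x b : ℤ) (n : ℕ) (ω : Ω) : ℤ :=
  max 0 ((Finset.range (n + 1)).sup' Finset.nonempty_range_add_one fun m => walk C x m ω - b)

/-- Single-period dividends under the barrier policy at `b`. -/
def rdiv (C : ℕ → Ω → ℕ) (x b : ℤ) (n : ℕ) (ω : Ω) : ℤ :=
  Rdiv C x b n ω - if n = 0 then 0 else Rdiv C x b (n - 1) ω

/-- Ruin time of the walk reflected at the barrier `b`. -/
def Truin (C : ℕ → Ω → ℕ) (x b : ℤ) (ω : Ω) : ℕ∞ :=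
  sInf ((fun n : ℕ => (n : ℕ∞)) '' {n : ℕ | walk C x n ω - Rdiv C x b n ω ≤ -1})

lemma walk_stronglyMeasurable (C : ℕ → Ω → ℕ) (hC : ∀ i, Measurable (C i)) (x : ℤ) (n : ℕ) :
    StronglyMeasurable (walk C x n) := by
  have h : Measurable fun ω => ∑ i ∈ Finset.range n, (C i ω : ℤ) :=
    Finset.measurable_sum _ fun i _ => (measurable_from_top.comp (hC i))
  exact (measurable_const.sub h).stronglyMeasurable

end RW

/-!
Write `L(x, N) = ∑ₙ vⁿ P(the walk from x first reaches N at time n, staying ≥ 0)`, so that the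
expectation is `L(x, N)` and `W_v(y) = 1 / (p₀ L(0, y))`. Being upwards skip-free, the walk enters
`[x, ∞)` exactly at level `x`; cutting the path at that time, the past and the restarted walk are
independent and the restarted claims have the same law, whence `L(0, N) = L(0, x) L(x, N)`, which
is the claim `L(x, N) = W_v(x) / W_v(N)`. Positivity: with no claims at all, the walk climbs from
`0` to `y` in `y` steps, an event of probability `p₀ʸ > 0`.
-/

namespace RW

open Function

lemma natCast_lt_sInf_image_iff {Q : Set ℕ} {n : ℕ} :
    (n : ℕ∞) < sInf ((fun m : ℕ => (m : ℕ∞)) '' Q) ↔ ∀ m ∈ Q, n < m := by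
  rw [← ENat.add_one_le_iff (ENat.natCast_ne_top n), le_sInf_iff, forall_mem_image]
  refine forall₂_congr fun m _ => ?_
  rw [ENat.add_one_le_iff (ENat.natCast_ne_top n), Nat.cast_lt]

lemma sInf_image_eq_natCast_iff {Q : Set ℕ} {n : ℕ} :
    sInf ((fun m : ℕ => (m : ℕ∞)) '' Q) = n ↔ n ∈ Q ∧ ∀ m ∈ Q, n ≤ m := by
  constructor
  · intro h
    have hne : ((fun m : ℕ => (m : ℕ∞)) '' Q).Nonempty := by
      by_contra hQ
      rw [not_nonempty_iff_eq_empty.mp hQ, sInf_empty] at h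
      exact ENat.top_ne_natCast n h
    obtain ⟨k, hk, hkn⟩ := h ▸ csInf_mem hne
    obtain rfl : k = n := Nat.cast_injective hkn
    exact ⟨hk, fun m hm => Nat.cast_le.mp (h ▸ sInf_le (mem_image_of_mem _ hm))⟩
  · rintro ⟨hn, hmin⟩
    refine le_antisymm (sInf_le (mem_image_of_mem _ hn)) (le_sInf ?_)
    rintro _ ⟨m, hm, rfl⟩
    exact Nat.cast_le.mpr (hmin m hm)

section Walk

variable {Ω : Type*} {C : ℕ → Ω → ℕ} {x y N : ℤ} {n : ℕ} {ω : Ω}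

lemma walk_zero : walk C x 0 ω = x := by
  simp [walk]

lemma walk_succ_le (n : ℕ) : walk C x (n + 1) ω ≤ walk C x n ω + 1 := by
  simp only [walk, Finset.sum_range_succ]
  push_cast
  omega

lemma walk_shift (t j : ℕ) :
    walk (fun i => C (t + i)) (walk C x t ω) j ω = walk C x (t + j) ω := by
  simp only [walk, Finset.sum_range_add]
  push_cast
  ring

lemma walk_eq_of_first_ge (hyx : y ≤ x) (hge : x ≤ walk C y n ω)
    (hlt : ∀ m < n, walk C y m ω < x) : walk C y n ω = x := by
  cases n with
  | zero => rw [walk_zero] at hge ⊢; omega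
  | succ k => linarith [walk_succ_le (C := C) (x := y) (ω := ω) k, hlt k k.lt_succ_self]

lemma measurable_walk {m : MeasurableSpace Ω} (hC : ∀ i < n, Measurable[m] (C i)) {k : ℕ}
    (hk : k ≤ n) : Measurable[m] (walk C x k) :=
  measurable_const.sub <| Finset.measurable_sum _ fun i hi =>
    measurable_from_top.comp (hC i (by simp at hi; omega))

end Walk

section ExitEvents

variable {Ω : Type*} {C : ℕ → Ω → ℕ} {x y N : ℤ} {n : ℕ} {ω : Ω}

def exitTopAt (C : ℕ → Ω → ℕ) (x N : ℤ) (n : ℕ) : Set Ω :=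
  {ω | N ≤ walk C x n ω ∧ (∀ m < n, walk C x m ω < N) ∧ ∀ m ≤ n, 0 ≤ walk C x m ω}

lemma mem_exitTopAt_iff :
    ω ∈ exitTopAt C x N n ↔ tauPlus C x N ω = n ∧ (n : ℕ∞) < tauMinus C x (-1) ω := by
  rw [tauPlus, tauMinus, sInf_image_eq_natCast_iff, natCast_lt_sInf_image_iff]
  simp only [exitTopAt, mem_ofPred_eq, and_assoc]
  refine and_congr_right fun _ => and_congr ?_ ?_
  · exact forall_congr' fun m => by omega
  · exact forall_congr' fun m => by omega

lemma pairwise_disjoint_exitTopAt : Pairwise (Disjoint on exitTopAt C x N) := by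
  intro n m hnm
  refine Set.disjoint_left.mpr fun ω hn hm => hnm ?_
  exact Nat.cast_injective ((mem_exitTopAt_iff.mp hn).1.symm.trans (mem_exitTopAt_iff.mp hm).1)

lemma setOf_tauPlus_lt_tauMinus :
    {ω | tauPlus C x N ω < tauMinus C x (-1) ω} = ⋃ n, exitTopAt C x N n := by
  ext ω
  simp only [mem_ofPred_eq, mem_iUnion, mem_exitTopAt_iff]
  constructor
  · intro h
    obtain ⟨n, hn⟩ := ENat.ne_top_iff_exists.mp (h.trans_le le_top).ne
    exact ⟨n, hn.symm, hn ▸ h⟩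
  · rintro ⟨n, hn, hlt⟩
    exact hn ▸ hlt

lemma exitTopAt_eq_empty_of_neg (hx : x < 0) : exitTopAt C x N n = ∅ :=
  eq_empty_of_forall_notMem fun ω hω => by
    have := hω.2.2 0 n.zero_le
    rw [walk_zero] at this
    omega

lemma measurableSet_exitTopAt {m : MeasurableSpace Ω} (hC : ∀ i < n, Measurable[m] (C i)) :
    MeasurableSet[m] (exitTopAt C x N n) := by
  have hwalk : ∀ k ≤ n, Measurable[m] (walk C x k) := fun k hk => measurable_walk hC hk
  simp only [exitTopAt, ofPred_and, ofPred_forall]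
  refine ((hwalk n le_rfl) measurableSet_Ici).inter
    ((MeasurableSet.iInter fun k => MeasurableSet.iInter fun hk => ?_).inter
      (MeasurableSet.iInter fun k => MeasurableSet.iInter fun hk => ?_))
  · exact (hwalk k hk.le) measurableSet_Iio
  · exact (hwalk k hk) measurableSet_Ici

lemma exitTopAt_eq_preimage :
    exitTopAt C x N n = (fun ω i => C i ω) ⁻¹' exitTopAt (fun i c => c i) x N n :=
  rfl

/-- Strong Markov decomposition at the first entrance into `[x, ∞)`, which by skip-freeness
happens at level exactly `x`. -/
lemma exitTopAt_eq_biUnion (hyx : y ≤ x) (hxN : x ≤ N) (K : ℕ) :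
    exitTopAt C y N K = ⋃ n ∈ Finset.range (K + 1),
      exitTopAt C y x n ∩ exitTopAt (fun i => C (n + i)) x N (K - n) := by
  ext ω
  simp only [mem_iUnion, Finset.mem_range, mem_inter_iff, exitTopAt, mem_ofPred_eq, exists_prop]
  constructor
  · rintro ⟨hK, hbelow, hpos⟩
    obtain ⟨n, hxn, hlt⟩ : ∃ n, x ≤ walk C y n ω ∧ ∀ m < n, walk C y m ω < x :=
      have hex : ∃ n, x ≤ walk C y n ω := ⟨K, hxN.trans hK⟩
      ⟨Nat.find hex, Nat.find_spec hex, fun m hm => not_le.mp (Nat.find_min hex hm)⟩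
    have hnK : n ≤ K := le_of_not_gt fun hKn => (hlt K hKn).not_ge (hxN.trans hK)
    have hshift : ∀ j, walk (fun i => C (n + i)) x j ω = walk C y (n + j) ω := fun j => by
      rw [← walk_eq_of_first_ge hyx hxn hlt, walk_shift]
    refine ⟨n, by omega, ⟨hxn, hlt, fun m hm => hpos m (hm.trans hnK)⟩,
      ?_, fun j hj => ?_, fun j hj => ?_⟩
    · rw [hshift, Nat.add_sub_cancel' hnK]; exact hK
    · rw [hshift]; exact hbelow _ (by omega)
    · rw [hshift]; exact hpos _ (by omega)
  · rintro ⟨n, hnK, ⟨hxn, hlt, hpos⟩, hK, hbelow, hpos'⟩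
    have hshift : ∀ m, n ≤ m → walk C y m ω = walk (fun i => C (n + i)) x (m - n) ω :=
      fun m hm => by
        rw [← walk_eq_of_first_ge hyx hxn hlt, walk_shift, Nat.add_sub_cancel' hm]
    refine ⟨?_, fun m hm => ?_, fun m hm => ?_⟩
    · rw [hshift K (by omega)]; exact hK
    · rcases lt_or_ge m n with h | h
      · exact (hlt m h).trans_le hxN
      · rw [hshift m h]; exact hbelow _ (by omega)
    · rcases le_or_gt m n with h | h
      · exact hpos m h
      · rw [hshift m h.le]; exact hpos' _ (by omega)

lemma pairwiseDisjoint_exitTopAt_inter (K : ℕ) :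
    (Finset.range (K + 1) : Set ℕ).PairwiseDisjoint
      fun n => exitTopAt C y x n ∩ exitTopAt (fun i => C (n + i)) x N (K - n) :=
  fun _ _ _ _ hnm => (pairwise_disjoint_exitTopAt hnm).mono inter_subset_left inter_subset_left

lemma indicator_tauPlus_lt_tauMinus_eq_tsum (s : ℝ≥0∞) :
    {ω | tauPlus C x N ω < tauMinus C x (-1) ω}.indicator (fun ω => s ^ (tauPlus C x N ω).toNat)
      = fun ω => ∑' n, (exitTopAt C x N n).indicator (fun _ => s ^ n) ω := by
  funext ω
  rw [setOf_tauPlus_lt_tauMinus]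
  by_cases hω : ω ∈ ⋃ n, exitTopAt C x N n
  · obtain ⟨n, hn⟩ := mem_iUnion.mp hω
    rw [indicator_of_mem hω, (mem_exitTopAt_iff.mp hn).1, ENat.toNat_natCast,
      tsum_eq_single n fun m hm => indicator_of_notMem
        (fun hm' => disjoint_left.mp (pairwise_disjoint_exitTopAt hm) hm' hn) _,
      indicator_of_mem hn]
  · rw [indicator_of_notMem hω]
    exact (ENNReal.tsum_eq_zero.mpr fun n =>
      indicator_of_notMem (fun hn => hω (mem_iUnion_of_mem n hn)) _).symm

end ExitEvents

theorem _root_.ENNReal.tsum_mul_tsum_eq_tsum_sum_range (a b : ℕ → ℝ≥0∞) :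
    (∑' n, a n) * ∑' n, b n = ∑' K, ∑ n ∈ Finset.range (K + 1), a n * b (K - n) := by
  simp_rw [← Finset.Nat.sum_antidiagonal_eq_sum_range_succ fun n m => a n * b m,
    ← ENNReal.tsum_mul_right, ← ENNReal.tsum_mul_left]
  rw [← ENNReal.tsum_prod' (f := fun p : ℕ × ℕ => a p.1 * b p.2),
    ← Finset.HasAntidiagonal.sigmaAntidiagonalEquivProd.tsum_eq, ENNReal.tsum_sigma']
  refine tsum_congr fun K => ?_
  rw [tsum_fintype]
  exact Finset.sum_finset_coe (fun p : ℕ × ℕ => a p.1 * b p.2) _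

section Probability

open ProbabilityTheory

variable {Ω : Type*} [MeasurableSpace Ω] {P : Measure Ω} {C : ℕ → Ω → ℕ} {x y N : ℤ}

lemma map_shift_eq_map (hC : ∀ i, Measurable (C i)) (hindep : iIndepFun C P)
    (hident : ∀ i, P.map (C i) = P.map (C 0)) (t : ℕ) :
    P.map (fun ω i => C (t + i) ω) = P.map (fun ω i => C i ω) := by
  rw [(hindep.precomp (add_right_injective t)).map_fun_eq_infinitePi_map fun i => hC (t + i),
    hindep.map_fun_eq_infinitePi_map hC]
  simp only [hident]

lemma measure_exitTopAt_shift (hC : ∀ i, Measurable (C i)) (hindep : iIndepFun C P)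
    (hident : ∀ i, P.map (C i) = P.map (C 0)) (t n : ℕ) :
    P (exitTopAt (fun i => C (t + i)) x N n) = P (exitTopAt C x N n) := by
  have hE : MeasurableSet (exitTopAt (fun i (c : ℕ → ℕ) => c i) x N n) :=
    measurableSet_exitTopAt fun i _ => measurable_pi_apply i
  rw [exitTopAt_eq_preimage, exitTopAt_eq_preimage (C := C),
    ← Measure.map_apply (measurable_pi_lambda _ fun i => hC (t + i)) hE,
    ← Measure.map_apply (measurable_pi_lambda _ hC) hE, map_shift_eq_map hC hindep hident]

lemma measure_exitTopAt_inter_shift (hC : ∀ i, Measurable (C i)) (hindep : iIndepFun C P)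
    (n m : ℕ) :
    P (exitTopAt C y x n ∩ exitTopAt (fun i => C (n + i)) x N m)
      = P (exitTopAt C y x n) * P (exitTopAt (fun i => C (n + i)) x N m) := by
  have hpast_future := indep_iSup_of_disjoint (fun i => (hC i).comap_le) hindep.iIndep
    (Iio_disjoint_Ici (a := n) le_rfl)
  refine (Indep_iff _ _ _).mp hpast_future _ _ ?_ ?_
  · exact measurableSet_exitTopAt fun i hi => (comap_measurable (C i)).mono
      (le_iSup₂ (f := fun j (_ : j ∈ Iio n) => MeasurableSpace.comap (C j) inferInstance) i hi)
      le_rfl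
  · exact measurableSet_exitTopAt fun i _ => (comap_measurable (C (n + i))).mono
      (le_iSup₂ (f := fun j (_ : j ∈ Ici n) => MeasurableSpace.comap (C j) inferInstance) (n + i)
        (by simp)) le_rfl

lemma measure_exitTopAt_eq_sum (hC : ∀ i, Measurable (C i)) (hindep : iIndepFun C P)
    (hident : ∀ i, P.map (C i) = P.map (C 0)) (hyx : y ≤ x) (hxN : x ≤ N) (K : ℕ) :
    P (exitTopAt C y N K)
      = ∑ n ∈ Finset.range (K + 1), P (exitTopAt C y x n) * P (exitTopAt C x N (K - n)) := by
  rw [exitTopAt_eq_biUnion hyx hxN K, measure_biUnion_finset (pairwiseDisjoint_exitTopAt_inter K)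
    fun n _ => (measurableSet_exitTopAt fun i _ => hC i).inter
      (measurableSet_exitTopAt fun i _ => hC (n + i))]
  refine Finset.sum_congr rfl fun n _ => ?_
  rw [measure_exitTopAt_inter_shift hC hindep, measure_exitTopAt_shift hC hindep hident]

/-- `E_x[s^(τ_N^+); τ_N^+ < τ_(-1)^-]`, taken in `ℝ≥0∞` so that rearranging series needs no
summability argument. -/
def exitTransform (P : Measure Ω) (C : ℕ → Ω → ℕ) (s : ℝ≥0∞) (x N : ℤ) : ℝ≥0∞ :=
  ∑' n, s ^ n * P (exitTopAt C x N n)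

theorem exitTransform_mul (hC : ∀ i, Measurable (C i)) (hindep : iIndepFun C P)
    (hident : ∀ i, P.map (C i) = P.map (C 0)) (hyx : y ≤ x) (hxN : x ≤ N) (s : ℝ≥0∞) :
    exitTransform P C s y N = exitTransform P C s y x * exitTransform P C s x N := by
  rw [exitTransform, exitTransform, exitTransform, ENNReal.tsum_mul_tsum_eq_tsum_sum_range]
  refine tsum_congr fun K => ?_
  rw [measure_exitTopAt_eq_sum hC hindep hident hyx hxN, Finset.mul_sum]
  refine Finset.sum_congr rfl fun n hn => ?_
  rw [show s ^ K = s ^ n * s ^ (K - n) by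
    rw [← pow_add, Nat.add_sub_cancel' (Nat.le_of_lt_succ (Finset.mem_range.mp hn))]]
  ring

lemma exitTransform_ne_top [IsFiniteMeasure P] (hC : ∀ i, Measurable (C i)) {s : ℝ≥0∞}
    (hs : s ≤ 1) : exitTransform P C s x N ≠ ⊤ := by
  refine ne_top_of_le_ne_top (measure_ne_top P (⋃ n, exitTopAt C x N n)) ?_
  calc exitTransform P C s x N
      ≤ ∑' n, P (exitTopAt C x N n) :=
        ENNReal.tsum_le_tsum fun n => mul_le_of_le_one_left' (pow_le_one' hs n)
    _ = P (⋃ n, exitTopAt C x N n) := (measure_iUnion pairwise_disjoint_exitTopAt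
        fun n => measurableSet_exitTopAt fun i _ => hC i).symm

lemma Eind_eq_toReal_exitTransform (hC : ∀ i, Measurable (C i)) {v : ℝ} (hv : 0 ≤ v) :
    Eind P {ω | tauPlus C x N ω < tauMinus C x (-1) ω} (fun ω => v ^ (tauPlus C x N ω).toNat)
      = (exitTransform P C (ENNReal.ofReal v) x N).toReal := by
  set F := {ω | tauPlus C x N ω < tauMinus C x (-1) ω}.indicator
    fun ω => ENNReal.ofReal v ^ (tauPlus C x N ω).toNat
  have hF : F = fun ω => ∑' n, (exitTopAt C x N n).indicator (fun _ => ENNReal.ofReal v ^ n) ω :=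
    indicator_tauPlus_lt_tauMinus_eq_tsum _
  have hmeas : ∀ n, Measurable ((exitTopAt C x N n).indicator fun _ => ENNReal.ofReal v ^ n) :=
    fun n => measurable_const.indicator (measurableSet_exitTopAt fun i _ => hC i)
  calc Eind P _ _ = ∫ ω, (F ω).toReal ∂P := by
        refine integral_congr_ae (ae_of_all _ fun ω => ?_)
        simp only [F, indicator_apply]
        split_ifs <;> simp [ENNReal.toReal_pow, ENNReal.toReal_ofReal hv]
    _ = (∫⁻ ω, F ω ∂P).toReal := by
        refine integral_toReal ?_ (ae_of_all _ fun ω => ?_)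
        · exact hF ▸ (Measurable.tsum hmeas).aemeasurable
        · exact (indicator_le_self _ _ ω).trans_lt (ENNReal.pow_lt_top ENNReal.ofReal_lt_top)
    _ = _ := by
        rw [hF, lintegral_tsum fun n => (hmeas n).aemeasurable]
        simp only [lintegral_indicator_const (measurableSet_exitTopAt fun i _ => hC i)]
        rfl

lemma exitTransform_pos (hindep : iIndepFun C P) (hzero : ∀ i, 0 < P {ω | C i ω = 0})
    {s : ℝ≥0∞} (hs : 0 < s) (y : ℕ) : 0 < exitTransform P C s 0 y := by
  have hsub : (⋂ i ∈ Finset.range y, C i ⁻¹' {0}) ⊆ exitTopAt C 0 y y := by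
    intro ω hω
    simp only [mem_iInter, Finset.mem_range, mem_preimage, mem_singleton_iff] at hω
    have hwalk : ∀ m ≤ y, walk C 0 m ω = m := fun m hm => by
      have hsum : ∀ i ∈ Finset.range m, (C i ω : ℤ) = 0 := fun i hi => by
        simp [hω i (by simp at hi; omega)]
      simp [walk, Finset.sum_eq_zero hsum]
    refine ⟨(hwalk y le_rfl).ge, fun m hm => ?_, fun m hm => ?_⟩ <;>
      rw [hwalk m (by omega)] <;> omega
  have hP : 0 < P (exitTopAt C 0 y y) :=
    calc 0 < ∏ i ∈ Finset.range y, P (C i ⁻¹' {0}) :=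
          CanonicallyOrderedAdd.prod_pos.mpr fun i _ => hzero i
      _ = P (⋂ i ∈ Finset.range y, C i ⁻¹' {0}) :=
        (hindep.meas_biInter fun i _ => ⟨{0}, measurableSet_singleton 0, rfl⟩).symm
      _ ≤ _ := measure_mono hsub
  exact (ENNReal.mul_pos (ENNReal.pow_pos hs y).ne' hP.ne').trans_le (ENNReal.le_tsum y)

end Probability

variable {Ω : Type*} [MeasurableSpace Ω]

theorem two_sided_exit_upwards_general
    (P : Measure Ω) [IsProbabilityMeasure P]
    (C : ℕ → Ω → ℕ) (p : ℕ → ℝ)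
    (hC : ∀ i, Measurable (C i))
    (hindep : ProbabilityTheory.iIndepFun C P)
    (hdist : ∀ i k, P {ω | C i ω = k} = ENNReal.ofReal (p k))
    (hp0 : 0 < p 0) :
    ∀ v : ℝ, v ∈ Set.Ioc (0 : ℝ) 1 →
      (∀ (N : ℕ) (x : ℤ), x ≤ (N : ℤ) →
        Eind P {ω | tauPlus C x N ω < tauMinus C x (-1) ω}
            (fun ω => v ^ (tauPlus C x N ω).toNat)
          = W P C v (p 0) x / W P C v (p 0) N) ∧
      (∀ y : ℕ, 0 < Eind P {ω | tauPlus C 0 y ω < tauMinus C 0 (-1) ω}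
            (fun ω => v ^ (tauPlus C 0 y ω).toNat)) := by
  intro v hv
  have hident : ∀ i, P.map (C i) = P.map (C 0) := fun i => Measure.ext_of_singleton fun k => by
    rw [Measure.map_apply (hC i) (measurableSet_singleton k),
      Measure.map_apply (hC 0) (measurableSet_singleton k)]
    exact (hdist i k).trans (hdist 0 k).symm
  have hzero : ∀ i, 0 < P {ω | C i ω = 0} := fun i => hdist i 0 ▸ ENNReal.ofReal_pos.mpr hp0
  set L := exitTransform P C (ENNReal.ofReal v)
  have hE : ∀ x N : ℤ, Eind P {ω | tauPlus C x N ω < tauMinus C x (-1) ω}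
      (fun ω => v ^ (tauPlus C x N ω).toNat) = (L x N).toReal :=
    fun x N => Eind_eq_toReal_exitTransform hC hv.1.le
  have hpos : ∀ y : ℕ, 0 < (L 0 y).toReal := fun y => ENNReal.toReal_pos
    (exitTransform_pos hindep hzero (ENNReal.ofReal_pos.mpr hv.1) y).ne'
    (exitTransform_ne_top hC (ENNReal.ofReal_le_one.mpr hv.2))
  have hW : ∀ y : ℕ, W P C v (p 0) y = 1 / (p 0 * (L 0 y).toReal) := fun y => by
    rw [W, if_pos (Nat.cast_nonneg y), hE]
  refine ⟨fun N x hxN => ?_, fun y => hE 0 y ▸ hpos y⟩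
  rw [hE]
  rcases lt_or_ge x 0 with hx | hx
  · simp [L, exitTransform, exitTopAt_eq_empty_of_neg hx, W, hx.not_ge]
  · lift x to ℕ using hx
    have hmul : L 0 N = L 0 x * L x N :=
      exitTransform_mul hC hindep hident (Nat.cast_nonneg x) hxN _
    rw [hW, hW, hmul, ENNReal.toReal_mul]
    field_simp [(hpos x).ne', hp0.ne']

/-- Smooth two-sided exit: `E_x[v^(τ_N^+); τ_N^+ < τ_(-1)^-] = W_v(x)/W_v(N)`, and the
expectation entering the definition of `W_v` is strictly positive. -/
theorem two_sided_exit_upwards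
    (P : Measure Ω) [IsProbabilityMeasure P]
    (C : ℕ → Ω → ℕ) (p : ℕ → ℝ)
    (hC : ∀ i, Measurable (C i))
    (hindep : ProbabilityTheory.iIndepFun C P)
    (hdist : ∀ i k, P {ω | C i ω = k} = ENNReal.ofReal (p k))
    (hnn : ∀ k, 0 ≤ p k) (hsum : ∑' k, p k = 1) (hp0 : 0 < p 0) :
    ∀ v : ℝ, v ∈ Set.Ioc (0 : ℝ) 1 →
      (∀ (N : ℕ) (x : ℤ), x ≤ (N : ℤ) →
        Eind P {ω | tauPlus C x N ω < tauMinus C x (-1) ω}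
            (fun ω => v ^ (tauPlus C x N ω).toNat)
          = W P C v (p 0) x / W P C v (p 0) N) ∧
      (∀ y : ℕ, 0 < Eind P {ω | tauPlus C 0 y ω < tauMinus C 0 (-1) ω}
            (fun ω => v ^ (tauPlus C 0 y ω).toNat)) :=
  two_sided_exit_upwards_general P C p hC hindep hdist hp0

end RW
end
end

section
/- For every v, w ∈ (0,1], every b ∈ ℕ₀ and every integer x ≤ b, the joint transform of the ruin time and the deficit at ruin, killed upon up-crossing b, satisfies E_x[v^{τ_{−1}^−} · w^{−X(τ_{−1}^−)}; τ_{−1}^− < τ_b^+] = Z_v(x,w) − (W_v(x)/W_v(b))·Z_v(b,w). -/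
/-!
A ruin path from `x` that up-crosses `b` first climbs to exactly `b` (the walk is upward
skip-free) and then is a ruin path from `b`. Cutting there (the strong Markov property at
`τ_b^+`) gives
`Ψ_v(x,w) = E_x[v^τ⁻ w^(-X(τ⁻)); τ⁻ < τ_b^+] + E_x[v^(τ_b^+); τ_b^+ < τ⁻] Ψ_v(b,w)`,
and cutting a passage from `0` to `b` at its first visit to `x` gives
`E_x[v^(τ_b^+); τ_b^+ < τ⁻] = W_v(x) / W_v(b)`. Substituted into `Z_v`, the `α_v(w) W_v` terms
cancel.

The strong Markov property is obtained combinatorially. Each event involved is the disjoint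
union of the cylinders `{C_0 = l_0, …, C_(n-1) = l_(n-1)}` over a prefix-free set of claim lists
`l`, each of probability `∏ p_(l_i)`; so the expectations are sums over lists, and the cutting
above is a bijection between lists and pairs of lists under which these sums factor.
-/

open MeasureTheory Set
open scoped ENNReal

noncomputable section

namespace RW

open List

section Paths

variable {x b : ℤ} {U D : Set ℤ} {l l₁ l₂ : List ℕ}

/-- `l` lists the first `l.length` claims; `walkEnd x (l.take m)` is then the position at time
`m` of the walk started at `x`. -/
def walkEnd (x : ℤ) (l : List ℕ) : ℤ := x + l.length - (l.map ((↑) : ℕ → ℤ)).sum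

@[simp] lemma walkEnd_nil (x : ℤ) : walkEnd x [] = x := by simp [walkEnd]

lemma walkEnd_append (x : ℤ) (l₁ l₂ : List ℕ) :
    walkEnd x (l₁ ++ l₂) = walkEnd (walkEnd x l₁) l₂ := by
  simp only [walkEnd, length_append, map_append, sum_append]
  push_cast
  ring

lemma walkEnd_concat_le (x : ℤ) (l : List ℕ) (c : ℕ) :
    walkEnd x (l.concat c) ≤ walkEnd x l + 1 := by
  rw [concat_eq_append, walkEnd_append]
  simp [walkEnd]

lemma walkEnd_replicate_zero (x : ℤ) (n : ℕ) : walkEnd x (replicate n 0) = x + n := by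
  simp [walkEnd]

lemma walkEnd_take_append (x : ℤ) (l₁ l₂ : List ℕ) (m : ℕ) :
    walkEnd x ((l₁ ++ l₂).take m) =
      walkEnd (walkEnd x (l₁.take m)) (l₂.take (m - l₁.length)) := by
  rw [take_append, walkEnd_append]

lemma walkEnd_eq_of_first_ge (hx : x ≤ b) (hlt : ∀ m < l.length, walkEnd x (l.take m) < b)
    (hge : b ≤ walkEnd x l) : walkEnd x l = b := by
  rcases l.eq_nil_or_concat with rfl | ⟨l, c, rfl⟩
  · simp only [walkEnd_nil] at hge ⊢
    omega
  · have hl : walkEnd x l < b := by simpa using hlt l.length (by simp)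
    have := walkEnd_concat_le x l c
    omega

def passage (x : ℤ) (U D : Set ℤ) : Set (List ℕ) :=
  {l | (∀ m < l.length, walkEnd x (l.take m) ∈ U) ∧ walkEnd x l ∈ D}

def reaching (x b : ℤ) : Set (List ℕ) := {l | ∃ m ≤ l.length, b ≤ walkEnd x (l.take m)}

lemma isAntichain_passage (x : ℤ) (hUD : Disjoint U D) :
    IsAntichain (· <+: ·) (passage x U D) := by
  intro l hl l' hl' hne hpre
  have hlt : l.length < l'.length :=
    lt_of_le_of_ne hpre.length_le fun h => hne (hpre.eq_of_length h)
  have hU : walkEnd x l ∈ U := by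
    simpa [← prefix_iff_eq_take.mp hpre] using hl'.1 l.length hlt
  exact hUD.ne_of_mem hU hl.2 rfl

lemma append_mem_passage_iff :
    l₁ ++ l₂ ∈ passage x U D ↔
      (∀ m < l₁.length, walkEnd x (l₁.take m) ∈ U) ∧
        l₂ ∈ passage (walkEnd x l₁) U D := by
  simp only [passage, Set.mem_ofPred_eq, walkEnd_append, length_append]
  constructor
  · rintro ⟨hU, hD⟩
    refine ⟨fun m hm => ?_, fun j hj => ?_, hD⟩
    · simpa [walkEnd_take_append, Nat.sub_eq_zero_of_le hm.le] using hU m (by omega)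
    · simpa [walkEnd_take_append, take_of_length_le] using hU (l₁.length + j) (by omega)
  · rintro ⟨hU₁, hU₂, hD⟩
    refine ⟨fun m hm => ?_, hD⟩
    rcases lt_or_ge m l₁.length with h | h
    · simpa [walkEnd_take_append, Nat.sub_eq_zero_of_le h.le] using hU₁ m h
    · have := hU₂ (m - l₁.length) (by omega)
      rwa [walkEnd_take_append, take_of_length_le h]

lemma exists_take_mem_passage (hx : x ≤ b) (hl : l ∈ reaching x b) :
    ∃ m ≤ l.length, l.take m ∈ passage x (Iio b) {b} := by
  classical
  obtain ⟨hm, hbm⟩ := Nat.find_spec hl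
  have hlt : ∀ j < (l.take (Nat.find hl)).length,
      walkEnd x ((l.take (Nat.find hl)).take j) < b := by
    intro j hj
    rw [length_take, min_eq_left hm] at hj
    rw [take_take, min_eq_left hj.le]
    exact lt_of_not_ge fun h => Nat.find_min hl hj ⟨by omega, h⟩
  exact ⟨Nat.find hl, hm, hlt, walkEnd_eq_of_first_ge hx hlt hbm⟩

theorem bijOn_append_passage (hx : x ≤ b) (U D : Set ℤ) :
    BijOn (fun q : List ℕ × List ℕ => q.1 ++ q.2)
      (passage x (U ∩ Iio b) {b} ×ˢ passage b U D) (passage x U D ∩ reaching x b) := by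
  refine ⟨?_, ?_, ?_⟩
  · rintro ⟨l₁, l₂⟩ ⟨h₁, h₂⟩
    have hend : walkEnd x l₁ = b := h₁.2
    refine ⟨append_mem_passage_iff.mpr ⟨fun m hm => (h₁.1 m hm).1, hend ▸ h₂⟩,
      l₁.length, by simp, by simp [hend]⟩
  · rintro ⟨l₁, l₂⟩ ⟨h₁, -⟩ ⟨l₁', l₂'⟩ ⟨h₁', -⟩
      (he : l₁ ++ l₂ = l₁' ++ l₂')
    have hanti := isAntichain_passage x (U := U ∩ Iio b) (D := {b}) (by simp)
    have hpre : l₁ <+: l₁' ++ l₂' := he ▸ prefix_append l₁ l₂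
    obtain rfl : l₁ = l₁' := by
      rcases le_total l₁.length l₁'.length with h | h
      · exact hanti.eq h₁ h₁' (prefix_of_prefix_length_le hpre (prefix_append _ _) h)
      · exact (hanti.eq h₁' h₁ (prefix_of_prefix_length_le (prefix_append _ _) hpre h)).symm
    simpa using he
  · rintro l ⟨hl, hreach⟩
    obtain ⟨m, -, hm⟩ := exists_take_mem_passage hx hreach
    have hend : walkEnd x (l.take m) = b := hm.2
    rw [← take_append_drop m l, append_mem_passage_iff, hend] at hl
    exact ⟨(l.take m, l.drop m), ⟨⟨fun j hj => ⟨hl.1 j hj, hm.1 j hj⟩, hm.2⟩, hl.2⟩,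
      take_append_drop m l⟩

lemma passage_diff_reaching (hD : D ⊆ Iio b) :
    passage x U D \ reaching x b = passage x (U ∩ Iio b) D := by
  ext l
  simp only [passage, reaching, Set.mem_sdiff, Set.mem_ofPred_eq, Set.mem_inter_iff, Set.mem_Iio,
    not_exists, not_and, not_le]
  constructor
  · rintro ⟨⟨hU, hD'⟩, hlt⟩
    exact ⟨fun m hm => ⟨hU m hm, hlt m hm.le⟩, hD'⟩
  · rintro ⟨hU, hD'⟩
    refine ⟨⟨fun m hm => (hU m hm).1, hD'⟩, fun m hm => ?_⟩
    rcases hm.lt_or_eq with hm | rfl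
    · exact (hU m hm).2
    · simpa using hD hD'

lemma passage_subset_reaching (hD : D ⊆ Ici b) : passage x U D ⊆ reaching x b :=
  fun l hl => ⟨l.length, le_rfl, by simpa using hD hl.2⟩

end Paths

section PathSums

variable {p : ℕ → ℝ} {v w : ℝ}

def pathProb (p : ℕ → ℝ) (l : List ℕ) : ℝ≥0∞ :=
  (l.map fun k => ENNReal.ofReal (p k)).prod

lemma pathProb_append (p : ℕ → ℝ) (l₁ l₂ : List ℕ) :
    pathProb p (l₁ ++ l₂) = pathProb p l₁ * pathProb p l₂ := by
  simp [pathProb]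

def pathSum (p : ℕ → ℝ) (S : Set (List ℕ)) (φ : List ℕ → ℝ≥0∞) : ℝ≥0∞ :=
  ∑' l : S, φ l * pathProb p l

lemma pathSum_eq_inter_add_sdiff (S T : Set (List ℕ)) (φ : List ℕ → ℝ≥0∞) :
    pathSum p S φ = pathSum p (S ∩ T) φ + pathSum p (S \ T) φ := by
  unfold pathSum
  rw [← ENNReal.summable.tsum_union_disjoint (f := fun l => φ l * pathProb p l)
    Set.disjoint_sdiff_inter.symm ENNReal.summable, Set.inter_union_sdiff]

theorem pathSum_append_of_bijOn {S T R : Set (List ℕ)}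
    (h : BijOn (fun q : List ℕ × List ℕ => q.1 ++ q.2) (S ×ˢ T) R)
    {φ ψ χ : List ℕ → ℝ≥0∞}
    (hχ : ∀ l₁ ∈ S, ∀ l₂ ∈ T, χ (l₁ ++ l₂) = φ l₁ * ψ l₂) :
    pathSum p R χ = pathSum p S φ * pathSum p T ψ := by
  let F : List ℕ → List ℕ → ℝ≥0∞ := fun l₁ l₂ =>
    φ l₁ * pathProb p l₁ * (ψ l₂ * pathProb p l₂)
  calc pathSum p R χ
      = ∑' q : ↥(S ×ˢ T), χ (q.1.1 ++ q.1.2) * pathProb p (q.1.1 ++ q.1.2) :=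
        ((h.equiv _).tsum_eq fun l : R => χ l * pathProb p l).symm
    _ = ∑' q : ↥(S ×ˢ T), F q.1.1 q.1.2 :=
        tsum_congr fun q => by rw [hχ _ q.2.1 _ q.2.2, pathProb_append]; ring
    _ = ∑' q : ↥S × ↥T, F q.1 q.2 :=
        (Equiv.Set.prod S T).tsum_eq fun q : ↥S × ↥T => F q.1 q.2
    _ = pathSum p S φ * pathSum p T ψ := by
        rw [ENNReal.tsum_prod (f := fun (a : S) (b : T) => F a b), pathSum, pathSum,
          ← ENNReal.tsum_mul_right]
        simp only [F, ENNReal.tsum_mul_left]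

def ruinWeight (v w : ℝ) (x : ℤ) (l : List ℕ) : ℝ≥0∞ :=
  ENNReal.ofReal (v ^ l.length * w ^ (-walkEnd x l))

def discount (v : ℝ) (l : List ℕ) : ℝ≥0∞ := ENNReal.ofReal (v ^ l.length)

lemma ruinWeight_le_one (hv : 0 ≤ v) (hv1 : v ≤ 1) (hw : 0 < w) (hw1 : w ≤ 1) {x : ℤ}
    {l : List ℕ} (hl : walkEnd x l ≤ -1) : ruinWeight v w x l ≤ 1 :=
  ENNReal.ofReal_le_one.mpr <| mul_le_one₀ (pow_le_one₀ hv hv1) (zpow_nonneg hw.le _)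
    (zpow_le_one₀ hw hw1 (by omega))

lemma discount_le_one (hv : 0 ≤ v) (hv1 : v ≤ 1) (l : List ℕ) : discount v l ≤ 1 :=
  ENNReal.ofReal_le_one.mpr (pow_le_one₀ hv hv1)

lemma discount_append (hv : 0 ≤ v) (l₁ l₂ : List ℕ) :
    discount v (l₁ ++ l₂) = discount v l₁ * discount v l₂ := by
  rw [discount, length_append, pow_add, ENNReal.ofReal_mul (pow_nonneg hv _)]
  rfl

lemma ruinWeight_append (hv : 0 ≤ v) (w : ℝ) (x : ℤ) (l₁ l₂ : List ℕ) :
    ruinWeight v w x (l₁ ++ l₂) = discount v l₁ * ruinWeight v w (walkEnd x l₁) l₂ := by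
  rw [ruinWeight, length_append, pow_add, walkEnd_append, mul_assoc,
    ENNReal.ofReal_mul (pow_nonneg hv _)]
  rfl

theorem pathSum_ruinWeight_eq_add_mul (hv : 0 ≤ v) (w : ℝ) (p : ℕ → ℝ) {x b : ℤ} (hx : x ≤ b)
    (hb : 0 ≤ b) :
    pathSum p (passage x (Ioi (-1)) (Iic (-1))) (ruinWeight v w x) =
      pathSum p (passage x (Ioo (-1) b) (Iic (-1))) (ruinWeight v w x) +
        pathSum p (passage x (Ioo (-1) b) {b}) (discount v) *
          pathSum p (passage b (Ioi (-1)) (Iic (-1))) (ruinWeight v w b) := by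
  have hD : Iic (-1 : ℤ) ⊆ Iio b := fun z hz => by simp at hz ⊢; omega
  have hbij := bijOn_append_passage hx (Ioi (-1)) (Iic (-1))
  rw [Set.Ioi_inter_Iio] at hbij
  rw [pathSum_eq_inter_add_sdiff _ (reaching x b), passage_diff_reaching hD, Set.Ioi_inter_Iio,
    add_comm, pathSum_append_of_bijOn hbij fun l₁ h₁ l₂ _ => ?_]
  rw [ruinWeight_append hv, show walkEnd x l₁ = b from h₁.2]

theorem pathSum_discount_eq_mul (hv : 0 ≤ v) (p : ℕ → ℝ) {x₀ x b : ℤ} (hx₀ : x₀ ≤ x)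
    (hx : x ≤ b) :
    pathSum p (passage x₀ (Ioo (-1) b) {b}) (discount v) =
      pathSum p (passage x₀ (Ioo (-1) x) {x}) (discount v) *
        pathSum p (passage x (Ioo (-1) b) {b}) (discount v) := by
  have hbij := bijOn_append_passage hx₀ (Ioo (-1) b) {b}
  rw [Set.inter_eq_left.mpr (passage_subset_reaching (by simpa using hx)), Set.Ioo_inter_Iio,
    min_eq_right hx] at hbij
  exact pathSum_append_of_bijOn hbij fun l₁ _ l₂ _ => discount_append hv l₁ l₂

end PathSums

lemma lt_iff_exists_natCast_eq {a c : ℕ∞} :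
    a < c ↔ ∃ n : ℕ, a = n ∧ (n : ℕ∞) < c := by
  refine ⟨fun h => ?_, fun ⟨n, hn, h⟩ => hn ▸ h⟩
  obtain ⟨n, rfl⟩ := ENat.ne_top_iff_exists.mp h.ne_top
  exact ⟨n, rfl, h⟩

lemma sInf_natCast_image_eq_iff {S : Set ℕ} {n : ℕ} :
    sInf ((↑) '' S : Set ℕ∞) = n ↔ n ∈ S ∧ ∀ m < n, m ∉ S := by
  constructor
  · intro h
    have hS : S.Nonempty := by
      by_contra hS
      simp [Set.not_nonempty_iff_eq_empty.mp hS] at h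
    have hn : sInf S = n := by
      rw [← ENat.natCast_inj, ENat.natCast_sInf hS, ← sInf_image, h]
    exact ⟨hn ▸ Nat.sInf_mem hS, fun m hm => Nat.notMem_of_lt_sInf (hn ▸ hm)⟩
  · rintro ⟨hn, hmin⟩
    refine le_antisymm (sInf_le ⟨n, hn, rfl⟩) (le_sInf ?_)
    rintro _ ⟨m, hm, rfl⟩
    exact_mod_cast not_lt.mp fun h => hmin m h hm

lemma natCast_lt_sInf_natCast_image_iff {S : Set ℕ} {n : ℕ} :
    (n : ℕ∞) < sInf ((↑) '' S) ↔ ∀ m ≤ n, m ∉ S := by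
  rw [← ENat.add_one_le_iff (ENat.natCast_ne_top n), le_sInf_iff, Set.forall_mem_image]
  refine forall_congr' fun m => ?_
  norm_cast
  exact ⟨fun h hm hS => by have := h hS; omega, fun h hS => not_lt.mp fun hm => h (by omega) hS⟩

section Claims

variable {Ω : Type*} {C : ℕ → Ω → ℕ} {ω : Ω} {x b : ℤ} {n : ℕ}

def claims (C : ℕ → Ω → ℕ) (n : ℕ) (ω : Ω) : List ℕ := (List.range n).map (C · ω)

@[simp] lemma length_claims : (claims C n ω).length = n := by simp [claims]

lemma take_claims {m : ℕ} (h : m ≤ n) : (claims C n ω).take m = claims C m ω := by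
  rw [claims, ← map_take, take_range, min_eq_left h, claims]

lemma walk_eq_walkEnd : walk C x n ω = walkEnd x (claims C n ω) := by
  simp only [walk, walkEnd, claims, length_map, length_range, map_map]
  rfl

lemma claims_mem_passage_iff {U D : Set ℤ} :
    claims C n ω ∈ passage x U D ↔
      (∀ m < n, walk C x m ω ∈ U) ∧ walk C x n ω ∈ D := by
  simp only [passage, Set.mem_ofPred_eq, length_claims, walk_eq_walkEnd]
  exact and_congr_left' <| forall₂_congr fun m hm => by rw [take_claims hm.le]

lemma tauMinus_eq_iff :
    tauMinus C x (-1) ω = n ↔ claims C n ω ∈ passage x (Ioi (-1)) (Iic (-1)) := by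
  rw [tauMinus, sInf_natCast_image_eq_iff, claims_mem_passage_iff]
  simp only [Set.mem_ofPred_eq, Set.mem_Ioi, Set.mem_Iic, not_le]
  exact and_comm

lemma tauMinus_eq_and_lt_tauPlus_iff (hb : 0 ≤ b) :
    tauMinus C x (-1) ω = n ∧ (n : ℕ∞) < tauPlus C x b ω ↔
      claims C n ω ∈ passage x (Ioo (-1) b) (Iic (-1)) := by
  rw [tauPlus, natCast_lt_sInf_natCast_image_iff, tauMinus_eq_iff, claims_mem_passage_iff,
    claims_mem_passage_iff]
  simp only [Set.mem_ofPred_eq, Set.mem_Ioi, Set.mem_Iic, Set.mem_Ioo, not_le]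
  constructor
  · rintro ⟨⟨hU, hD⟩, hb'⟩
    exact ⟨fun m hm => ⟨hU m hm, hb' m hm.le⟩, hD⟩
  · rintro ⟨hU, hD⟩
    refine ⟨⟨fun m hm => (hU m hm).1, hD⟩, fun m hm => ?_⟩
    rcases hm.lt_or_eq with hm | rfl
    · exact (hU m hm).2
    · omega

lemma tauPlus_eq_and_lt_tauMinus_iff (hx : x ≤ b) (hb : 0 ≤ b) :
    tauPlus C x b ω = n ∧ (n : ℕ∞) < tauMinus C x (-1) ω ↔
      claims C n ω ∈ passage x (Ioo (-1) b) {b} := by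
  rw [tauPlus, tauMinus, sInf_natCast_image_eq_iff, natCast_lt_sInf_natCast_image_iff,
    claims_mem_passage_iff]
  simp only [Set.mem_ofPred_eq, Set.mem_Ioo, Set.mem_singleton_iff, not_le]
  constructor
  · rintro ⟨⟨hge, hlt⟩, hgt⟩
    refine ⟨fun m hm => ⟨hgt m hm.le, hlt m hm⟩, ?_⟩
    rw [walk_eq_walkEnd] at hge ⊢
    refine walkEnd_eq_of_first_ge hx (fun m hm => ?_) hge
    rw [length_claims] at hm
    rw [take_claims hm.le, ← walk_eq_walkEnd]
    exact hlt m hm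
  · rintro ⟨hU, hD⟩
    refine ⟨⟨hD.ge, fun m hm => (hU m hm).2⟩, fun m hm => ?_⟩
    rcases hm.lt_or_eq with hm | rfl
    · exact (hU m hm).1
    · omega

def cylinder (C : ℕ → Ω → ℕ) (l : List ℕ) : Set Ω := {ω | claims C l.length ω = l}

lemma mem_cylinder_claims (C : ℕ → Ω → ℕ) (n : ℕ) (ω : Ω) :
    ω ∈ cylinder C (claims C n ω) := by
  simp [cylinder]

lemma cylinder_eq_biInter (C : ℕ → Ω → ℕ) (l : List ℕ) :
    cylinder C l = ⋂ i ∈ Finset.range l.length, C i ⁻¹' {l.getD i 0} := by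
  ext ω
  simp only [cylinder, Set.mem_ofPred_eq, Set.mem_iInter, Finset.mem_range, Set.mem_preimage,
    Set.mem_singleton_iff]
  constructor
  · intro h i hi
    rw [← h, getD_eq_getElem _ _ (by simpa using hi)]
    simp [claims]
  · intro h
    refine ext_getElem (by simp) fun i hi _ => ?_
    rw [length_claims] at hi
    simp [claims, h i hi, hi]

lemma disjoint_cylinder {S : Set (List ℕ)} (hS : IsAntichain (· <+: ·) S) {l l' : List ℕ}
    (hl : l ∈ S) (hl' : l' ∈ S) (hne : l ≠ l') : Disjoint (cylinder C l) (cylinder C l') := by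
  refine Set.disjoint_left.mpr fun ω (h : claims C _ ω = l) (h' : claims C _ ω = l') => hne ?_
  rcases le_total l.length l'.length with hle | hle
  · refine hS.eq hl hl' (prefix_iff_eq_take.mpr ?_)
    rw [← h', take_claims hle, h]
  · refine (hS.eq hl' hl (prefix_iff_eq_take.mpr ?_)).symm
    rw [← h, take_claims hle, h']

lemma ofReal_indicator_eq_tsum_cylinder {A : Set Ω} {g : Ω → ℝ} {S : Set (List ℕ)}
    {φ : List ℕ → ℝ} (hS : IsAntichain (· <+: ·) S)
    (hA : ∀ ω, ω ∈ A ↔ ∃ n, claims C n ω ∈ S)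
    (hg : ∀ ω n, claims C n ω ∈ S → g ω = φ (claims C n ω)) (ω : Ω) :
    ENNReal.ofReal (A.indicator g ω) =
      ∑' l : S, (cylinder C l).indicator (fun _ => ENNReal.ofReal (φ l)) ω := by
  by_cases hω : ω ∈ A
  · obtain ⟨n, hn⟩ := (hA ω).mp hω
    rw [Set.indicator_of_mem hω, hg ω n hn, tsum_eq_single ⟨claims C n ω, hn⟩ fun l hl => ?_,
      Set.indicator_of_mem (mem_cylinder_claims C n ω)]
    exact Set.indicator_of_notMem (Set.disjoint_left.mp
      (disjoint_cylinder hS hn l.2 fun h => hl (Subtype.ext h.symm))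
      (mem_cylinder_claims C n ω)) _
  · rw [Set.indicator_of_notMem hω, ENNReal.ofReal_zero, eq_comm, ENNReal.tsum_eq_zero]
    exact fun l => Set.indicator_of_notMem (fun h => hω ((hA ω).mpr ⟨_, h.symm ▸ l.2⟩)) _

end Claims

section Measure

variable {Ω : Type*} [MeasurableSpace Ω]

structure IsIIDClaims (P : Measure Ω) (C : ℕ → Ω → ℕ) (p : ℕ → ℝ) : Prop where
  measurable : ∀ i, Measurable (C i)
  iIndepFun : ProbabilityTheory.iIndepFun C P
  measure_eq : ∀ i k, P {ω | C i ω = k} = ENNReal.ofReal (p k)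

variable {P : Measure Ω} {C : ℕ → Ω → ℕ} {p : ℕ → ℝ}

lemma measurableSet_cylinder (hC : ∀ i, Measurable (C i)) (l : List ℕ) :
    MeasurableSet (cylinder C l) := by
  rw [cylinder_eq_biInter]
  exact Finset.measurableSet_biInter _ fun i _ => hC i (measurableSet_singleton _)

lemma IsIIDClaims.measure_cylinder (hP : IsIIDClaims P C p) (l : List ℕ) :
    P (cylinder C l) = pathProb p l := by
  rw [cylinder_eq_biInter,
    hP.iIndepFun.meas_biInter fun i _ => ⟨_, measurableSet_singleton _, rfl⟩, pathProb,
    ← ofFn_getElem_eq_map, prod_ofFn, Finset.prod_range]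
  exact Finset.prod_congr rfl fun i _ => by rw [← getD_eq_getElem _ 0]; exact hP.measure_eq _ _

lemma IsIIDClaims.pathSum_le_one [IsProbabilityMeasure P] (hP : IsIIDClaims P C p)
    {S : Set (List ℕ)} (hS : IsAntichain (· <+: ·) S) {φ : List ℕ → ℝ≥0∞}
    (hφ : ∀ l ∈ S, φ l ≤ 1) : pathSum p S φ ≤ 1 :=
  calc pathSum p S φ ≤ ∑' l : S, P (cylinder C l) :=
        ENNReal.tsum_le_tsum fun l => by
          rw [hP.measure_cylinder]
          exact mul_le_of_le_one_left' (hφ l l.2)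
    _ = P (⋃ l : S, cylinder C l) :=
        (measure_iUnion (fun l l' hne => disjoint_cylinder hS l.2 l'.2 (Subtype.coe_ne_coe.mpr hne))
          fun l => measurableSet_cylinder hP.measurable l).symm
    _ ≤ 1 := prob_le_one

theorem IsIIDClaims.eind_eq_toReal_pathSum (hP : IsIIDClaims P C p) {A : Set Ω} {g : Ω → ℝ}
    {S : Set (List ℕ)} {φ : List ℕ → ℝ} (hS : IsAntichain (· <+: ·) S)
    (hA : ∀ ω, ω ∈ A ↔ ∃ n, claims C n ω ∈ S)
    (hg : ∀ ω n, claims C n ω ∈ S → g ω = φ (claims C n ω))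
    (hφ : ∀ l ∈ S, 0 ≤ φ l) :
    Eind P A g = (pathSum p S fun l => ENNReal.ofReal (φ l)).toReal := by
  let f : S → Ω → ℝ≥0∞ := fun l => (cylinder C l).indicator fun _ => ENNReal.ofReal (φ l)
  have hsum : ∀ ω, ENNReal.ofReal (A.indicator g ω) = ∑' l, f l ω :=
    ofReal_indicator_eq_tsum_cylinder hS hA hg
  have hf (l : S) : Measurable (f l) :=
    measurable_const.indicator (measurableSet_cylinder hP.measurable l)
  have hnonneg : ∀ ω, 0 ≤ A.indicator g ω := Set.indicator_nonneg fun ω hω => by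
    obtain ⟨n, hn⟩ := (hA ω).mp hω
    exact hg ω n hn ▸ hφ _ hn
  calc Eind P A g = ∫ ω, (∑' l, f l ω).toReal ∂P := by
        simp only [← hsum, ENNReal.toReal_ofReal (hnonneg _)]
        rfl
    _ = (∑' l, ∫⁻ ω, f l ω ∂P).toReal := by
        rw [integral_toReal (Measurable.tsum hf).aemeasurable
          (ae_of_all _ fun ω => by rw [← hsum]; exact ENNReal.ofReal_lt_top),
          lintegral_tsum fun l => (hf l).aemeasurable]
    _ = (pathSum p S fun l => ENNReal.ofReal (φ l)).toReal := by
        simp only [f, lintegral_indicator_const (measurableSet_cylinder hP.measurable _),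
          hP.measure_cylinder, pathSum]

end Measure

section Transforms

variable {Ω : Type*} [MeasurableSpace Ω]

def upTransform (P : Measure Ω) (C : ℕ → Ω → ℕ) (v : ℝ) (x b : ℤ) : ℝ :=
  Eind P {ω | tauPlus C x b ω < tauMinus C x (-1) ω} fun ω => v ^ (tauPlus C x b ω).toNat

variable {P : Measure Ω} {C : ℕ → Ω → ℕ} {p : ℕ → ℝ} {v w : ℝ} {x b : ℤ}

theorem IsIIDClaims.Psi_eq_toReal_pathSum (hP : IsIIDClaims P C p) (hv : 0 ≤ v) (hw : 0 < w)
    (x : ℤ) :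
    Psi P C v w x = (pathSum p (passage x (Ioi (-1)) (Iic (-1))) (ruinWeight v w x)).toReal := by
  refine hP.eind_eq_toReal_pathSum (φ := fun l => v ^ l.length * w ^ (-walkEnd x l))
    (isAntichain_passage x (Set.Iic_disjoint_Ioi le_rfl).symm) (fun ω => ?_)
    (fun ω n hn => ?_) (fun l _ => by positivity)
  · rw [Set.mem_ofPred_eq, lt_iff_exists_natCast_eq]
    simp only [ENat.natCast_lt_top, and_true, tauMinus_eq_iff]
  · rw [tauMinus_eq_iff.mpr hn, ENat.toNat_natCast, walk_eq_walkEnd, length_claims]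

theorem IsIIDClaims.eind_killed_eq_toReal_pathSum (hP : IsIIDClaims P C p) (hv : 0 ≤ v)
    (hw : 0 < w) (hb : 0 ≤ b) :
    Eind P {ω | tauMinus C x (-1) ω < tauPlus C x b ω}
        (fun ω => v ^ (tauMinus C x (-1) ω).toNat *
          w ^ (-(walk C x (tauMinus C x (-1) ω).toNat ω))) =
      (pathSum p (passage x (Ioo (-1) b) (Iic (-1))) (ruinWeight v w x)).toReal := by
  refine hP.eind_eq_toReal_pathSum (φ := fun l => v ^ l.length * w ^ (-walkEnd x l))
    (isAntichain_passage x ((Set.Iic_disjoint_Ioi le_rfl).symm.mono_left Set.Ioo_subset_Ioi_self))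
    (fun ω => ?_) (fun ω n hn => ?_) (fun l _ => by positivity)
  · rw [Set.mem_ofPred_eq, lt_iff_exists_natCast_eq]
    simp only [tauMinus_eq_and_lt_tauPlus_iff hb]
  · rw [((tauMinus_eq_and_lt_tauPlus_iff hb).mpr hn).1, ENat.toNat_natCast, walk_eq_walkEnd,
      length_claims]

theorem IsIIDClaims.upTransform_eq_toReal_pathSum (hP : IsIIDClaims P C p) (hv : 0 ≤ v)
    (hx : x ≤ b) (hb : 0 ≤ b) :
    upTransform P C v x b = (pathSum p (passage x (Ioo (-1) b) {b}) (discount v)).toReal := by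
  refine hP.eind_eq_toReal_pathSum (φ := fun l => v ^ l.length)
    (isAntichain_passage x (by simp)) (fun ω => ?_) (fun ω n hn => ?_) (fun l _ => by positivity)
  · rw [Set.mem_ofPred_eq, lt_iff_exists_natCast_eq]
    simp only [tauPlus_eq_and_lt_tauMinus_iff hx hb]
  · rw [((tauPlus_eq_and_lt_tauMinus_iff hx hb).mpr hn).1, ENat.toNat_natCast, length_claims]

theorem IsIIDClaims.eind_killed_eq_Psi_sub [IsProbabilityMeasure P] (hP : IsIIDClaims P C p)
    (hv : 0 ≤ v) (hv1 : v ≤ 1) (hw : 0 < w) (hw1 : w ≤ 1) (hx : x ≤ b) (hb : 0 ≤ b) :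
    Eind P {ω | tauMinus C x (-1) ω < tauPlus C x b ω}
        (fun ω => v ^ (tauMinus C x (-1) ω).toNat *
          w ^ (-(walk C x (tauMinus C x (-1) ω).toNat ω))) =
      Psi P C v w x - upTransform P C v x b * Psi P C v w b := by
  have hfin := (hP.pathSum_le_one (isAntichain_passage x (Set.Iic_disjoint_Ioi le_rfl).symm)
    fun l hl => ruinWeight_le_one hv hv1 hw hw1 hl.2).trans_lt ENNReal.one_lt_top
  rw [pathSum_ruinWeight_eq_add_mul hv w p hx hb, ENNReal.add_lt_top] at hfin
  rw [hP.Psi_eq_toReal_pathSum hv hw, pathSum_ruinWeight_eq_add_mul hv w p hx hb,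
    ENNReal.toReal_add hfin.1.ne hfin.2.ne, ENNReal.toReal_mul,
    hP.eind_killed_eq_toReal_pathSum hv hw hb, hP.upTransform_eq_toReal_pathSum hv hx hb,
    hP.Psi_eq_toReal_pathSum hv hw]
  ring

theorem IsIIDClaims.upTransform_mul (hP : IsIIDClaims P C p) (hv : 0 ≤ v) {x₀ : ℤ}
    (hx₀ : x₀ ≤ x) (hx : 0 ≤ x) (hxb : x ≤ b) :
    upTransform P C v x₀ b = upTransform P C v x₀ x * upTransform P C v x b := by
  rw [hP.upTransform_eq_toReal_pathSum hv (hx₀.trans hxb) (hx.trans hxb),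
    pathSum_discount_eq_mul hv p hx₀ hxb, ENNReal.toReal_mul,
    hP.upTransform_eq_toReal_pathSum hv hx₀ hx,
    hP.upTransform_eq_toReal_pathSum hv hxb (hx.trans hxb)]

theorem IsIIDClaims.upTransform_pos [IsProbabilityMeasure P] (hP : IsIIDClaims P C p)
    (hv : 0 < v) (hv1 : v ≤ 1) (hp0 : 0 < p 0) (hx : 0 ≤ x) (hxb : x ≤ b) :
    0 < upTransform P C v x b := by
  have hanti : IsAntichain (· <+: ·) (passage x (Ioo (-1) b) {b}) :=
    isAntichain_passage x (by simp)
  rw [hP.upTransform_eq_toReal_pathSum hv.le hxb (hx.trans hxb)]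
  refine ENNReal.toReal_pos (ne_of_gt ?_)
    ((hP.pathSum_le_one hanti fun l _ => discount_le_one hv.le hv1 l).trans_lt
      ENNReal.one_lt_top).ne
  -- with no claims at all the walk climbs from `x` to `b`
  have hmem : replicate (b - x).toNat 0 ∈ passage x (Ioo (-1) b) {b} := by
    refine ⟨fun m hm => ?_, ?_⟩
    · simp only [length_replicate] at hm
      simp only [take_replicate, walkEnd_replicate_zero, Set.mem_Ioo]
      omega
    · simp only [walkEnd_replicate_zero, Set.mem_singleton_iff]
      omega
  refine lt_of_lt_of_le ?_ (ENNReal.le_tsum ⟨_, hmem⟩)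
  simp only [discount, pathProb, map_replicate, prod_replicate, length_replicate]
  exact ENNReal.mul_pos (ENNReal.ofReal_pos.mpr (pow_pos hv _)).ne'
    (pow_ne_zero _ (ENNReal.ofReal_pos.mpr hp0).ne')

theorem upTransform_of_neg (hx : x < 0) : upTransform P C v x b = 0 := by
  have hτ : ∀ ω, tauMinus C x (-1) ω = 0 := fun ω =>
    le_antisymm (sInf_le ⟨0, by simp [walk]; omega, rfl⟩) zero_le
  simp [upTransform, Eind, hτ]

theorem W_of_nonneg {p₀ : ℝ} {y : ℤ} (hy : 0 ≤ y) :
    W P C v p₀ y = (p₀ * upTransform P C v 0 y)⁻¹ := by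
  rw [W, if_pos hy, one_div]
  rfl

theorem IsIIDClaims.W_eq_upTransform_mul [IsProbabilityMeasure P] (hP : IsIIDClaims P C p)
    (hv : 0 < v) (hv1 : v ≤ 1) (hp0 : 0 < p 0) (hx : x ≤ b) (hb : 0 ≤ b) :
    W P C v (p 0) x = upTransform P C v x b * W P C v (p 0) b := by
  rcases lt_or_ge x 0 with hx0 | hx0
  · rw [W, if_neg (not_le.mpr hx0), upTransform_of_neg hx0, zero_mul]
  · have h₀ := hP.upTransform_pos hv hv1 hp0 le_rfl hx0
    have h₁ := hP.upTransform_pos hv hv1 hp0 hx0 hx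
    rw [W_of_nonneg hx0, W_of_nonneg hb, hP.upTransform_mul hv.le hx0 hx0 hx]
    field_simp

theorem IsIIDClaims.W_ne_zero [IsProbabilityMeasure P] (hP : IsIIDClaims P C p)
    (hv : 0 < v) (hv1 : v ≤ 1) (hp0 : 0 < p 0) (hb : 0 ≤ b) : W P C v (p 0) b ≠ 0 := by
  rw [W_of_nonneg hb]
  exact inv_ne_zero (mul_pos hp0 (hP.upTransform_pos hv hv1 hp0 le_rfl hb)).ne'

end Transforms

variable {Ω : Type*} [MeasurableSpace Ω]

theorem deficit_at_ruin_two_sided_general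
    (P : Measure Ω) [IsProbabilityMeasure P]
    (C : ℕ → Ω → ℕ) (p : ℕ → ℝ)
    (hC : ∀ i, Measurable (C i))
    (hindep : ProbabilityTheory.iIndepFun C P)
    (hdist : ∀ i k, P {ω | C i ω = k} = ENNReal.ofReal (p k))
    (hp0 : 0 < p 0) :
    ∀ v ∈ Set.Ioc (0 : ℝ) 1, ∀ w ∈ Set.Ioc (0 : ℝ) 1, ∀ (b : ℕ) (x : ℤ), x ≤ (b : ℤ) →
      Eind P {ω | tauMinus C x (-1) ω < tauPlus C x b ω}
          (fun ω => v ^ (tauMinus C x (-1) ω).toNat *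
            w ^ (-(walk C x (tauMinus C x (-1) ω).toNat ω)))
        = Z P C v w (p 0) x - W P C v (p 0) x / W P C v (p 0) b * Z P C v w (p 0) b := by
  intro v ⟨hv, hv1⟩ w ⟨hw, hw1⟩ b x hxb
  have hP : IsIIDClaims P C p := ⟨hC, hindep, hdist⟩
  have hb : (0 : ℤ) ≤ b := Int.natCast_nonneg b
  have hW := hP.W_eq_upTransform_mul hv hv1 hp0 hxb hb
  rw [hP.eind_killed_eq_Psi_sub hv.le hv1 hw hw1 hxb hb, hW,
    mul_div_cancel_right₀ _ (hP.W_ne_zero hv hv1 hp0 hb), Z, Z, hW]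
  ring

/-- Joint transform of ruin time and deficit at ruin, killed at the upper level `b`:
`E_x[v^(τ_(-1)^-) w^(-X(τ_(-1)^-)); τ_(-1)^- < τ_b^+] = Z_v(x,w) - (W_v(x)/W_v(b))·Z_v(b,w)`. -/
theorem deficit_at_ruin_two_sided
    (P : Measure Ω) [IsProbabilityMeasure P]
    (C : ℕ → Ω → ℕ) (p : ℕ → ℝ)
    (hC : ∀ i, Measurable (C i))
    (hindep : ProbabilityTheory.iIndepFun C P)
    (hdist : ∀ i k, P {ω | C i ω = k} = ENNReal.ofReal (p k))
    (hnn : ∀ k, 0 ≤ p k) (hsum : ∑' k, p k = 1) (hp0 : 0 < p 0) :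
    ∀ v ∈ Set.Ioc (0 : ℝ) 1, ∀ w ∈ Set.Ioc (0 : ℝ) 1, ∀ (b : ℕ) (x : ℤ), x ≤ (b : ℤ) →
      Eind P {ω | tauMinus C x (-1) ω < tauPlus C x b ω}
          (fun ω => v ^ (tauMinus C x (-1) ω).toNat *
            w ^ (-(walk C x (tauMinus C x (-1) ω).toNat ω)))
        = Z P C v w (p 0) x - W P C v (p 0) x / W P C v (p 0) b * Z P C v w (p 0) b :=
  deficit_at_ruin_two_sided_general P C p hC hindep hdist hp0

end RW
end
end
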